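/- arXiv:2603.17129 — 3 statements merged into one kernel-verified Lean document; each statement's English description precedes it below -/
import Mathlib

section
/- Let m and n be finite index types, S ⊆ m × n a set of positions, and A : Matrix m n ℝ a real matrix whose support is contained in S (i.e., A i j = 0 whenever (i,j) ∉ S). Then rank(A) ≤ ν(S), where ν(S) is the maximum cardinality of a matching in S, i.e., the largest cardinality of a subset M ⊆ S such that no two elements of M share a first coordinate and no two share a second coordinate. -/
/-! A matrix of rank `r` has a nonsingular `r × r` submatrix. Some term of the Leibniz expansion
of its determinant is nonzero, so a permutation picks out `r` nonzero entries, in distinct rows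
and distinct columns; they lie in `S` and form a matching. -/

/-- The matching number of a pattern `S ⊆ m × n`: the largest cardinality of a
subset `M ⊆ S` in which no two elements share a first coordinate and no two
share a second coordinate. -/
noncomputable def matchingNumber {m n : Type*} (S : Set (m × n)) : ℕ :=
  sSup {k : ℕ | ∃ M : Finset (m × n), ↑M ⊆ S ∧
    (∀ p ∈ M, ∀ q ∈ M, p ≠ q → p.1 ≠ q.1 ∧ p.2 ≠ q.2) ∧ M.card = k}

open Function

namespace Matrix

variable {m n K : Type*} [Fintype m] [Fintype n] [Field K]

theorem exists_linearIndependent_rows_of_rank_eq (A : Matrix m n K) {r : ℕ} (hr : A.rank = r) :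
    ∃ f : Fin r → m, Injective f ∧ LinearIndependent K (A.submatrix f id).row := by
  obtain ⟨κ, a, -, hspan, hli⟩ := exists_linearIndependent' K A.row
  have := hli.finite
  have := Fintype.ofFinite κ
  have hcard : Fintype.card κ = r := by
    rw [linearIndependent_iff_card_eq_finrank_span.mp hli, Set.finrank, hspan,
      ← rank_eq_finrank_span_row, hr]
  let e : Fin r ≃ κ := (Fintype.equivFinOfCardEq hcard).symm
  have hli' : LinearIndependent K (A.submatrix (a ∘ e) id).row := hli.comp e e.injective
  exact ⟨a ∘ e, Injective.of_comp (f := A) hli'.injective, hli'⟩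

theorem exists_isUnit_submatrix (A : Matrix m n K) :
    ∃ (f : Fin A.rank → m) (g : Fin A.rank → n),
      Injective f ∧ Injective g ∧ IsUnit (A.submatrix f g) := by
  obtain ⟨f, hf, hrows⟩ := A.exists_linearIndependent_rows_of_rank_eq rfl
  have hrank : (A.submatrix f id)ᵀ.rank = A.rank := by
    rw [rank_transpose, hrows.rank_matrix, Fintype.card_fin]
  obtain ⟨g, hg, hcols⟩ := (A.submatrix f id)ᵀ.exists_linearIndependent_rows_of_rank_eq hrank
  exact ⟨f, g, hf, hg, (isUnit_transpose _).mp (linearIndependent_rows_iff_isUnit.mp hcols)⟩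

theorem exists_perm_forall_ne_zero_of_det_ne_zero {ι R : Type*} [Fintype ι] [DecidableEq ι]
    [CommRing R] {C : Matrix ι ι R} (hC : C.det ≠ 0) : ∃ σ : Equiv.Perm ι, ∀ i, C (σ i) i ≠ 0 := by
  by_contra! h
  refine hC (det_apply C ▸ Finset.sum_eq_zero fun σ _ => ?_)
  obtain ⟨i, hi⟩ := h σ
  rw [Finset.prod_eq_zero (Finset.mem_univ i) (f := fun j => C (σ j) j) hi, smul_zero]

end Matrix

theorem card_le_matchingNumber {m n ι : Type*} [Fintype m] [Fintype n] [Fintype ι]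
    {S : Set (m × n)} {f : ι → m} {g : ι → n} (hf : Injective f) (hg : Injective g)
    (hS : ∀ i, (f i, g i) ∈ S) : Fintype.card ι ≤ matchingNumber S := by
  let M := Finset.univ.map ⟨fun i => (f i, g i), fun i j hij => hf (congrArg Prod.fst hij)⟩
  refine le_csSup ⟨Fintype.card (m × n), ?_⟩ ⟨M, ?_, ?_, by simp [M]⟩
  · rintro k ⟨M, -, -, rfl⟩
    exact M.card_le_univ
  · intro p hp
    obtain ⟨i, -, rfl⟩ := Finset.mem_map.mp hp
    exact hS i
  · simp only [M, Finset.mem_map, Finset.mem_univ, true_and]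
    rintro _ ⟨i, rfl⟩ _ ⟨j, rfl⟩ hij
    have hij := ne_of_apply_ne (fun k => (f k, g k)) hij
    exact ⟨hf.ne hij, hg.ne hij⟩

theorem rank_le_matchingNumber_general
    {m n : Type*} [Fintype m] [Fintype n]
    (S : Set (m × n)) (A : Matrix m n ℝ)
    (hA : ∀ i j, (i, j) ∉ S → A i j = 0) :
    A.rank ≤ matchingNumber S := by
  obtain ⟨f, g, hf, hg, hC⟩ := A.exists_isUnit_submatrix
  obtain ⟨σ, hσ⟩ := Matrix.exists_perm_forall_ne_zero_of_det_ne_zero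
    ((Matrix.isUnit_iff_isUnit_det _).mp hC).ne_zero
  have hS : ∀ i, (f (σ i), g i) ∈ S := fun i => by_contra fun h => hσ i (hA _ _ h)
  simpa using card_le_matchingNumber (hf.comp σ.injective) hg hS

/-- A matrix supported on a pattern `S` has rank at most the
matching number of `S`. -/
theorem rank_le_matchingNumber
    {m n : Type*} [Fintype m] [Fintype n] [DecidableEq m] [DecidableEq n]
    (S : Set (m × n)) (A : Matrix m n ℝ)
    (hA : ∀ i j, (i, j) ∉ S → A i j = 0) :
    A.rank ≤ matchingNumber S :=
  rank_le_matchingNumber_general S A hA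
end

section
/- Let J and G be matrices over the multivariate real polynomial ring in n variables, with sizes so that A := J·G is defined, and for x ∈ ℝⁿ let J(x), A(x) denote entrywise evaluation at x. Suppose there exists a point x₀ ∈ ℝⁿ with rank(A(x₀)) = r, and suppose rank(J(x)) ≤ r for all x ∈ ℝⁿ. Then for almost all x ∈ ℝⁿ (all x outside a Lebesgue-null set), rank(A(x)) = rank(J(x)) = r; in particular, Im(A(x)) = Im(J(x)) for almost all x, i.e., the system is generically admissible. -/
/-! A nonzero `r × r` minor of `A(x₀)` is a polynomial in `x` that is not identically zero, and
the zero set of such a polynomial is Lebesgue-null (by induction on the number of variables: by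
Fubini, almost every line parallel to a coordinate axis meets it in the finitely many roots of a
nonzero univariate polynomial). Off that set `r ≤ rank A(x) ≤ rank J(x) ≤ r`, and
`Im A(x) ⊆ Im J(x)` together with equal dimensions gives equality of the images. -/

open MeasureTheory

theorem exists_linearIndependent_comp_fin {K V ι : Type*} [DivisionRing K] [AddCommGroup V]
    [Module K V] [Finite ι] (v : ι → V) {r : ℕ}
    (h : Module.finrank K (Submodule.span K (Set.range v)) = r) :
    ∃ f : Fin r → ι, LinearIndependent K (v ∘ f) := by
  obtain ⟨κ, a, ha, hspan, hli⟩ := exists_linearIndependent' K v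
  have : Finite κ := Finite.of_injective a ha
  have : Fintype κ := Fintype.ofFinite κ
  have hcard : Fintype.card κ = r := by
    rw [linearIndependent_iff_card_eq_finrank_span.mp hli, Set.finrank, hspan, h]
  let e : Fin r ≃ κ := (Fintype.equivFinOfCardEq hcard).symm
  exact ⟨a ∘ e, hli.comp e e.injective⟩

namespace Matrix

variable {m n o K : Type*} [Field K]

theorem exists_linearIndependent_row_submatrix [Finite m] [Fintype n] {r : ℕ} (M : Matrix m n K)
    (h : M.rank = r) : ∃ f : Fin r → m, LinearIndependent K (M.submatrix f id).row :=
  exists_linearIndependent_comp_fin M.row (M.rank_eq_finrank_span_row.symm.trans h)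

theorem exists_det_submatrix_ne_zero [Fintype m] [Fintype n] {r : ℕ} (M : Matrix m n K)
    (h : M.rank = r) : ∃ (f : Fin r → m) (g : Fin r → n), (M.submatrix f g).det ≠ 0 := by
  obtain ⟨f, hf⟩ := M.exists_linearIndependent_row_submatrix h
  have hrank : (M.submatrix f id)ᵀ.rank = r := by
    rw [rank_transpose, hf.rank_matrix, Fintype.card_fin]
  obtain ⟨g, hg⟩ := (M.submatrix f id)ᵀ.exists_linearIndependent_row_submatrix hrank
  refine ⟨f, g, fun hdet => ?_⟩
  have hunit : IsUnit (M.submatrix f g)ᵀ := linearIndependent_rows_iff_isUnit.mp hg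
  rw [isUnit_iff_isUnit_det, det_transpose, hdet] at hunit
  exact not_isUnit_zero hunit

theorem le_rank_of_det_submatrix_ne_zero {R : Type*} [CommRing R] [IsDomain R] [Fintype n]
    {r : ℕ} (M : Matrix m n R) (f : Fin r → m) (g : Fin r → n)
    (h : (M.submatrix f g).det ≠ 0) :
    r ≤ M.rank := by
  simpa using (rank_of_det_ne_zero h).symm.trans_le (M.rank_submatrix_le f g)

theorem range_mulVecLin_mul_eq_of_rank_eq [Fintype m] [Fintype n] [Fintype o] (M : Matrix m n K)
    (N : Matrix n o K) (h : (M * N).rank = M.rank) :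
    LinearMap.range (M * N).mulVecLin = LinearMap.range M.mulVecLin := by
  refine Submodule.eq_of_le_of_finrank_eq ?_ h
  rw [mulVecLin_mul]
  exact LinearMap.range_comp_le_range _ _

end Matrix

theorem ae_of_ae_ae_cons {α : Type*} [MeasureSpace α] [SigmaFinite (volume : Measure α)]
    {n : ℕ} {p : (Fin (n + 1) → α) → Prop} (hp : MeasurableSet {x | p x})
    (h : ∀ᵐ s : Fin n → α, ∀ᵐ y : α, p (Fin.cons y s)) :
    ∀ᵐ x : Fin (n + 1) → α, p x := by
  let e := MeasurableEquiv.piFinSuccAbove (fun _ : Fin (n + 1) => α) 0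
  have he : MeasurePreserving e volume (volume.prod volume) :=
    volume_preserving_piFinSuccAbove (fun _ => α) 0
  have hcons : ∀ y s, e.symm (y, s) = Fin.cons y s := fun y s => Fin.insertNth_zero' y s
  have hprod : ∀ᵐ z ∂(volume : Measure α).prod volume, p (e.symm z) := by
    rw [Measure.ae_prod_iff_ae_ae (p := fun z => p (e.symm z)) (e.symm.measurable hp),
      Measure.ae_ae_comm]
    · simpa only [hcons] using h
    · exact e.symm.measurable hp
  simpa using he.quasiMeasurePreserving.ae hprod

namespace MvPolynomial

theorem ae_eval_ne_zero {n : ℕ} {q : MvPolynomial (Fin n) ℝ} (hq : q ≠ 0) :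
    ∀ᵐ x : Fin n → ℝ, eval x q ≠ 0 := by
  induction n with
  | zero =>
    refine .of_forall fun x hx => hq ?_
    rw [eq_C_of_isEmpty q, eval_C] at hx
    rw [eq_C_of_isEmpty q, hx, map_zero]
  | succ n ih =>
    set Q := finSuccEquiv ℝ n q
    have hQ : Q ≠ 0 := (EmbeddingLike.map_ne_zero_iff).mpr hq
    have hmeas : MeasurableSet {x : Fin (n + 1) → ℝ | eval x q ≠ 0} :=
      (isOpen_ne_fun (continuous_eval q) continuous_const).measurableSet
    refine ae_of_ae_ae_cons hmeas ?_
    filter_upwards [ih (Polynomial.leadingCoeff_ne_zero.mpr hQ)] with s hs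
    have hQs : Q.map (eval s) ≠ 0 := fun h => hs <| by
      simpa using congrArg (Polynomial.coeff · Q.natDegree) h
    simp only [eval_eq_eval_mv_eval']
    exact measure_mono_null (fun y hy => by simpa using hy)
      ((Polynomial.finite_setOfPred_isRoot hQs).measure_zero _)

theorem ae_rank_map_eval_ge {n : ℕ} {m o : Type*} [Fintype m] [Fintype o]
    (A : Matrix m o (MvPolynomial (Fin n) ℝ)) (x₀ : Fin n → ℝ) :
    ∀ᵐ x : Fin n → ℝ, (A.map (eval x₀)).rank ≤ (A.map (eval x)).rank := by
  obtain ⟨f, g, hdet⟩ := (A.map (eval x₀)).exists_det_submatrix_ne_zero rfl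
  have hminor : ∀ x, eval x (A.submatrix f g).det = ((A.map (eval x)).submatrix f g).det :=
    fun x => by rw [RingHom.map_det, RingHom.mapMatrix_apply, Matrix.submatrix_map]
  have hminor_ne : (A.submatrix f g).det ≠ 0 := fun h => hdet (by rw [← hminor, h, map_zero])
  filter_upwards [ae_eval_ne_zero hminor_ne] with x hx
  exact Matrix.le_rank_of_det_submatrix_ne_zero _ f g (hminor x ▸ hx)

end MvPolynomial

theorem generic_admissibility_general
    {n : ℕ} {e ν p : Type*}
    [Fintype e] [Fintype ν] [Fintype p]
    (J : Matrix e ν (MvPolynomial (Fin n) ℝ))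
    (G : Matrix ν p (MvPolynomial (Fin n) ℝ))
    (A : Matrix e p (MvPolynomial (Fin n) ℝ)) (hA : A = J * G)
    (r : ℕ)
    (hx0 : ∃ x₀ : Fin n → ℝ, (A.map (MvPolynomial.eval x₀)).rank = r)
    (hJ : ∀ x : Fin n → ℝ, (J.map (MvPolynomial.eval x)).rank ≤ r) :
    ∀ᵐ x : Fin n → ℝ ∂volume,
      (A.map (MvPolynomial.eval x)).rank = r ∧
      (J.map (MvPolynomial.eval x)).rank = r ∧
      LinearMap.range (A.map (MvPolynomial.eval x)).mulVecLin =
        LinearMap.range (J.map (MvPolynomial.eval x)).mulVecLin := by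
  obtain ⟨x₀, hx₀⟩ := hx0
  filter_upwards [MvPolynomial.ae_rank_map_eval_ge A x₀] with x hx
  have hAx : A.map (MvPolynomial.eval x) =
      J.map (MvPolynomial.eval x) * G.map (MvPolynomial.eval x) := hA ▸ Matrix.map_mul
  have hAJ : (A.map (MvPolynomial.eval x)).rank ≤ (J.map (MvPolynomial.eval x)).rank :=
    hAx ▸ Matrix.rank_mul_le_left _ _
  have hAr : (A.map (MvPolynomial.eval x)).rank = r := le_antisymm (hAJ.trans (hJ x)) (hx₀ ▸ hx)
  have hJr : (J.map (MvPolynomial.eval x)).rank = r := le_antisymm (hJ x) (hAr ▸ hAJ)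
  refine ⟨hAr, hJr, ?_⟩
  rw [hAx]
  exact Matrix.range_mulVecLin_mul_eq_of_rank_eq _ _ (by rw [← hAx, hAr, hJr])

/-- For polynomial matrices `J`, `G` with `A = J * G`, if the
rank of `A` equals `r` at some point `x₀` and `rank (J x) ≤ r` everywhere, then
almost everywhere `rank (A x) = rank (J x) = r` and `Im (A x) = Im (J x)`:
the system is generically admissible. -/
theorem generic_admissibility
    {n : ℕ} {e ν p : Type*}
    [Fintype e] [Fintype ν] [Fintype p] [DecidableEq ν] [DecidableEq p]
    (J : Matrix e ν (MvPolynomial (Fin n) ℝ))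
    (G : Matrix ν p (MvPolynomial (Fin n) ℝ))
    (A : Matrix e p (MvPolynomial (Fin n) ℝ)) (hA : A = J * G)
    (r : ℕ)
    (hx0 : ∃ x₀ : Fin n → ℝ, (A.map (MvPolynomial.eval x₀)).rank = r)
    (hJ : ∀ x : Fin n → ℝ, (J.map (MvPolynomial.eval x)).rank ≤ r) :
    ∀ᵐ x : Fin n → ℝ ∂volume,
      (A.map (MvPolynomial.eval x)).rank = r ∧
      (J.map (MvPolynomial.eval x)).rank = r ∧
      LinearMap.range (A.map (MvPolynomial.eval x)).mulVecLin =
        LinearMap.range (J.map (MvPolynomial.eval x)).mulVecLin :=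
  generic_admissibility_general J G A hA r hx0 hJ
end

section
/- Let G be a connected simple graph on the vertex set Fin N (N ≥ 1), let L = lapMatrix ℝ G be its graph Laplacian over ℝ, and let y₀ : Fin N → ℝ be an initial condition. Then the solution y(t) = exp(−t·L)·y₀ of the diffusive dynamics ẏ = −L y converges, as t → ∞, to the consensus vector whose every entry equals the average (1/N)·Σⱼ y₀(j): Tendsto (fun t => (Matrix.exp ℝ ((−t) • L)).mulVec y₀) atTop (nhds (fun _ => (Σⱼ y₀ j) / N)). -/
/-!
Diagonalise the positive semidefinite Laplacian: `exp (-t L) = f_t(L)` with `f_t x = exp (-t x)`,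
and on the (finite, nonnegative) spectrum `f_t` tends pointwise to the indicator of `{0}`, so
`exp (-t L)` tends to the orthogonal projection `P` onto `ker L`. For a connected graph `ker L`
consists of the constant vectors, so `P y₀` is constant; and `y₀ - P y₀` lies in the range of the
symmetric matrix `L`, which is orthogonal to the constants, so `P y₀` has the same sum as `y₀`.
-/

open Filter Matrix Topology Unitary
open scoped ComplexOrder

namespace Matrix

variable {n 𝕜 : Type*} [RCLike 𝕜] [Fintype n] [DecidableEq n] {A : Matrix n n 𝕜}

namespace IsHermitian

theorem exp_smul_eq_cfc (hA : A.IsHermitian) (s : ℝ) :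
    NormedSpace.exp (s • A) = cfc (fun x => Real.exp (s * x)) A := by
  have hU : star (hA.eigenvectorUnitary : Matrix n n 𝕜) =
      (hA.eigenvectorUnitary : Matrix n n 𝕜)⁻¹ :=
    (inv_eq_left_inv (Unitary.star_mul_self_of_mem hA.eigenvectorUnitary.2)).symm
  rw [hA.cfc_eq, IsHermitian.cfc, RCLike.real_smul_eq_coe_smul (K := 𝕜)]
  conv_lhs => rw [hA.spectral_theorem, ← map_smul, ← diagonal_smul]
  simp only [conjStarAlgAut_apply, hU]
  rw [exp_conj _ _ Unitary.isUnit_coe, exp_diagonal]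
  congr 3
  funext i
  simp only [algebraMap_smul, Pi.coe_exp, Pi.smul_apply, Function.comp_apply,
    RCLike.real_smul_ofReal]
  rw [Real.exp_eq_exp_ℝ, ← RCLike.algebraMap_eq_ofReal, NormedSpace.algebraMap_exp_comm, map_mul]

theorem tendsto_cfc_fun {X : Type*} {l : Filter X} {F : X → ℝ → ℝ} {f : ℝ → ℝ}
    (hA : A.IsHermitian) (h : ∀ x ∈ spectrum ℝ A, Tendsto (F · x) l (𝓝 (f x))) :
    Tendsto (fun x => cfc (F x) A) l (𝓝 (cfc f A)) := by
  simp only [hA.cfc_eq, IsHermitian.cfc, conjStarAlgAut_apply]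
  refine ((continuous_const.matrix_mul continuous_id).matrix_mul continuous_const).tendsto _
    |>.comp <| (continuous_id.matrix_diagonal.tendsto _).comp <| tendsto_pi_nhds.mpr fun i => ?_
  exact (RCLike.continuous_ofReal.tendsto _).comp (h _ (hA.eigenvalues_mem_spectrum_real i))

end IsHermitian

noncomputable def kernelProjection (A : Matrix n n 𝕜) : Matrix n n 𝕜 :=
  cfc (fun x : ℝ => if x = 0 then 1 else 0) A

theorem IsHermitian.mul_kernelProjection (hA : A.IsHermitian) : A * kernelProjection A = 0 := by
  nth_rewrite 1 [← cfc_id' ℝ A hA.isSelfAdjoint]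
  rw [kernelProjection, ← cfc_mul _ _ _ (by fun_prop) (A.finite_real_spectrum.continuousOn _)]
  refine (cfc_congr fun x _ => ?_).trans (cfc_zero ℝ A)
  by_cases hx : x = 0 <;> simp [hx]

/-- `cfc (·⁻¹) A` is the Moore–Penrose pseudo-inverse of `A`, since `0⁻¹ = 0` in `ℝ`. -/
theorem IsHermitian.one_sub_kernelProjection (hA : A.IsHermitian) :
    1 - kernelProjection A = A * cfc (fun x : ℝ => x⁻¹) A := by
  have hcont (f : ℝ → ℝ) : ContinuousOn f (spectrum ℝ A) := A.finite_real_spectrum.continuousOn f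
  nth_rewrite 2 [← cfc_id' ℝ A hA.isSelfAdjoint]
  rw [kernelProjection, ← cfc_one ℝ A hA.isSelfAdjoint, ← cfc_sub _ _ _ (hcont _) (hcont _),
    ← cfc_mul _ _ _ (hcont _) (hcont _)]
  refine cfc_congr fun x _ => ?_
  by_cases hx : x = 0 <;> simp [hx]

theorem PosSemidef.tendsto_exp_neg_smul (hA : A.PosSemidef) :
    Tendsto (fun t : ℝ => NormedSpace.exp ((-t) • A)) atTop (𝓝 (kernelProjection A)) := by
  simp_rw [hA.isHermitian.exp_smul_eq_cfc]
  refine hA.isHermitian.tendsto_cfc_fun fun x hx => ?_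
  obtain ⟨i, rfl⟩ := hA.isHermitian.spectrum_real_eq_range_eigenvalues ▸ hx
  rcases (hA.eigenvalues_nonneg i).eq_or_lt with h0 | hpos
  · simp [← h0]
  · simp only [hpos.ne', if_false, neg_mul]
    exact Real.tendsto_exp_neg_atTop_nhds_zero.comp (tendsto_id.atTop_mul_const hpos)

end Matrix

theorem eq_sum_div_card_of_forall_eq {ι : Type*} [Fintype ι] {w : ι → ℝ}
    (hw : ∀ i j, w i = w j) (i : ι) : w i = (∑ j, w j) / Fintype.card ι := by
  have : (Fintype.card ι : ℝ) ≠ 0 := Nat.cast_ne_zero.mpr (Fintype.card_pos_iff.mpr ⟨i⟩).ne'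
  rw [Finset.sum_congr rfl fun j _ => hw j i, Finset.sum_const, Finset.card_univ, nsmul_eq_mul]
  field_simp

namespace SimpleGraph

variable {V : Type*} [Fintype V] [DecidableEq V]

theorem sum_lapMatrix_mulVec (G : SimpleGraph V) [DecidableRel G.Adj] {R : Type*} [CommRing R]
    (u : V → R) : ∑ i, (G.lapMatrix R *ᵥ u) i = 0 := by
  have h := dotProduct_mulVec (fun _ => (1 : R)) (G.lapMatrix R) u
  rwa [← (G.isSymm_lapMatrix R).eq, vecMul_transpose, (G.isSymm_lapMatrix R).eq,
    lapMatrix_mulVec_const_eq_zero, zero_dotProduct, ← Pi.one_def, one_dotProduct] at h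

theorem Connected.lapMatrix_mulVec_eq_zero_iff {G : SimpleGraph V} [DecidableRel G.Adj]
    (hG : G.Connected) {x : V → ℝ} : G.lapMatrix ℝ *ᵥ x = 0 ↔ ∀ i j, x i = x j := by
  rw [lapMatrix_mulVec_eq_zero_iff_forall_reachable]
  exact ⟨fun h i j => h i j (hG.preconnected i j), fun h i j _ => h i j⟩

end SimpleGraph

theorem laplacian_flow_tendsto_average_general
    {N : ℕ} (G : SimpleGraph (Fin N)) [DecidableRel G.Adj]
    (hconn : G.Connected) (y₀ : Fin N → ℝ) :
    Tendsto
      (fun t : ℝ =>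
        (NormedSpace.exp ((-t) • (G.lapMatrix ℝ))).mulVec y₀)
      atTop
      (nhds (fun _ : Fin N => (∑ j, y₀ j) / N)) := by
  have hL := G.posSemidef_lapMatrix ℝ
  set P := kernelProjection (G.lapMatrix ℝ)
  have hconst : ∀ i j, (P *ᵥ y₀) i = (P *ᵥ y₀) j := by
    rw [← hconn.lapMatrix_mulVec_eq_zero_iff, mulVec_mulVec, hL.isHermitian.mul_kernelProjection,
      zero_mulVec]
  have hsum : ∑ i, (P *ᵥ y₀) i = ∑ i, y₀ i := by
    have h := G.sum_lapMatrix_mulVec (cfc (fun x : ℝ => x⁻¹) (G.lapMatrix ℝ) *ᵥ y₀)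
    rw [mulVec_mulVec, ← hL.isHermitian.one_sub_kernelProjection, sub_mulVec, one_mulVec] at h
    simp only [Pi.sub_apply, Finset.sum_sub_distrib, sub_eq_zero] at h
    exact h.symm
  have hlimit : P *ᵥ y₀ = fun _ => (∑ j, y₀ j) / N := by
    funext i
    rw [eq_sum_div_card_of_forall_eq hconst i, hsum, Fintype.card_fin]
  rw [← hlimit]
  exact ((continuous_id.matrix_mulVec continuous_const).tendsto _).comp hL.tendsto_exp_neg_smul

/-- For a connected simple graph on `Fin N` with Laplacian `L`,
the solution `y(t) = exp (-t L) y₀` of the diffusive dynamics `ẏ = -L y`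
converges, as `t → ∞`, to the consensus vector whose entries all equal the
average of the initial condition. -/
theorem laplacian_flow_tendsto_average
    {N : ℕ} (hN : 1 ≤ N) (G : SimpleGraph (Fin N)) [DecidableRel G.Adj]
    (hconn : G.Connected) (y₀ : Fin N → ℝ) :
    Tendsto
      (fun t : ℝ =>
        (NormedSpace.exp ((-t) • (G.lapMatrix ℝ))).mulVec y₀)
      atTop
      (nhds (fun _ : Fin N => (∑ j, y₀ j) / N)) :=
  laplacian_flow_tendsto_average_general G hconn y₀
end
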